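/- arXiv:1612.03644 — 7 statements merged into one kernel-verified Lean document; each statement's English description precedes it below -/
import Mathlib

section
/- Let M be an n×n integer matrix congruent to J−I modulo 2 (entrywise). Then the characteristic polynomial of M is congruent modulo 2Z[x] to (x+1)^n if n is even, and to x(x+1)^{n−1} if n is odd. -/
open Polynomial

/-- The all-ones matrix. -/
def Jmat (n : ℕ) : Matrix (Fin n) (Fin n) ℤ := Matrix.of fun _ _ => 1

/-! The all-ones matrix is the rank-one matrix `𝟙 𝟙ᵀ`, whose characteristic polynomial is
`X ^ n - n X ^ (n - 1)`; shifting by the identity substitutes `X + 1` for `X`. Reducing mod 2 only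
the parity of `n` survives, and `(X + 1) ^ n - (X + 1) ^ (n - 1) = X (X + 1) ^ (n - 1)`. -/

namespace Matrix

variable {n R : Type*} [Fintype n] [DecidableEq n] [CommRing R]

theorem charpoly_of_one_sub_one :
    (of (fun _ _ : n => (1 : R)) - 1).charpoly =
      (X + 1) ^ Fintype.card n - (Fintype.card n : R[X]) * (X + 1) ^ (Fintype.card n - 1) := by
  have hrank_one : of (fun _ _ : n => (1 : R)) = vecMulVec (fun _ => 1) (fun _ => 1) := by
    ext; simp [vecMulVec]
  rw [hrank_one, ← (scalar n).map_one, charpoly_sub_scalar, charpoly_vecMulVec]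
  simp [dotProduct, smul_eq_C_mul]

theorem charpoly_map_intCast_eq_of_modEq {k : ℕ} {A B : Matrix n n ℤ}
    (h : ∀ i j, A i j ≡ B i j [ZMOD k]) :
    A.charpoly.map (Int.castRingHom (ZMod k)) = B.charpoly.map (Int.castRingHom (ZMod k)) := by
  rw [← charpoly_map, ← charpoly_map]
  congr 1
  ext i j
  exact (ZMod.intCast_eq_intCast_iff _ _ k).2 (h i j)

end Matrix

theorem Polynomial.coeff_modEq_of_map_intCast_eq {k : ℕ} {p q : ℤ[X]}
    (h : p.map (Int.castRingHom (ZMod k)) = q.map (Int.castRingHom (ZMod k))) (m : ℕ) :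
    p.coeff m ≡ q.coeff m [ZMOD k] := by
  rw [← ZMod.intCast_eq_intCast_iff]
  simpa using congrArg (coeff · m) h

theorem charpoly_mod_two {n : ℕ} (M : Matrix (Fin n) (Fin n) ℤ)
    (hM : ∀ i j, M i j ≡ (Jmat n - 1) i j [ZMOD 2]) :
    (Even n → ∀ m : ℕ, M.charpoly.coeff m ≡ ((X + 1 : ℤ[X]) ^ n).coeff m [ZMOD 2]) ∧
    (Odd n → ∀ m : ℕ, M.charpoly.coeff m ≡ ((X * (X + 1) ^ (n - 1) : ℤ[X])).coeff m [ZMOD 2]) := by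
  have hred : M.charpoly.map (Int.castRingHom (ZMod 2)) =
      (X + 1) ^ n - C (n : ZMod 2) * (X + 1) ^ (n - 1) := by
    rw [Matrix.charpoly_map_intCast_eq_of_modEq hM, Jmat, Matrix.charpoly_of_one_sub_one]
    simp
  refine ⟨fun he => Polynomial.coeff_modEq_of_map_intCast_eq ?_,
    fun ho => Polynomial.coeff_modEq_of_map_intCast_eq ?_⟩
  · rw [hred, ZMod.natCast_eq_zero_iff_even.2 he]
    simp
  · obtain ⟨k, rfl⟩ : ∃ k, n = k + 1 := ⟨n - 1, (Nat.succ_pred_eq_of_pos ho.pos).symm⟩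
    rw [hred, ZMod.natCast_eq_one_iff_odd.2 ho, Nat.add_sub_cancel]
    simp only [Polynomial.map_mul, Polynomial.map_pow, Polynomial.map_add, map_X, Polynomial.map_one,
      map_one]
    ring
end

section
/- A Seidel matrix of even order has no even integer eigenvalue. -/
open Polynomial

def IsSeidel {n : ℕ} (S : Matrix (Fin n) (Fin n) ℝ) : Prop :=
  S.IsSymm ∧ (∀ i, S i i = 0) ∧ ∀ i j, i ≠ j → S i j = 1 ∨ S i j = -1

theorem seidel_even_order_no_even_eigenvalue {n : ℕ} (hn : Even n)
    (S : Matrix (Fin n) (Fin n) ℝ) (hS : IsSeidel S) :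
    ∀ m : ℤ, Even m → ¬ S.charpoly.IsRoot (m : ℝ) := by
  obtain ⟨hsym, hdiag, hoff⟩ := hS
  intro m hm hroot
  -- the integer matrix underlying S
  set T : Matrix (Fin n) (Fin n) ℤ :=
    Matrix.of (fun i j => if S i j = 1 then 1 else if i = j then 0 else -1) with hT
  have hmap : T.map (Int.cast : ℤ → ℝ) = S := by
    ext i j
    by_cases h : i = j
    · subst h
      simp [hT, Matrix.map_apply, hdiag i]
    · rcases hoff i j h with h1 | h1 <;> simp [hT, Matrix.map_apply, h1, h] <;> norm_num
  have hc : S.charpoly = T.charpoly.map (Int.castRingHom ℝ) := by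
    rw [← Matrix.charpoly_map T (Int.castRingHom ℝ)]
    congr 1
    exact hmap.symm
  -- the characteristic polynomial of T vanishes at m over ℤ
  have hz : T.charpoly.eval m = 0 := by
    have h := hroot
    rw [Polynomial.IsRoot, hc, Polynomial.eval_intCast_map] at h
    simpa using h
  -- reduce mod 2
  have hz2 : ((T.map (Int.castRingHom (ZMod 2))).charpoly).eval ((m : ZMod 2)) = 0 := by
    rw [Matrix.charpoly_map, Polynomial.eval_intCast_map]
    simp [hz]
  have hm2 : ((m : ZMod 2)) = 0 := by
    rw [ZMod.intCast_zmod_eq_zero_iff_dvd]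
    exact hm.two_dvd
  rw [hm2] at hz2
  -- the reduced matrix is 1 + J over ZMod 2
  have hTJ : T.map (Int.castRingHom (ZMod 2)) =
      1 + Matrix.replicateCol Unit (fun _ => (1 : ZMod 2)) * Matrix.replicateRow Unit (fun _ => (1 : ZMod 2)) := by
    ext i j
    rw [Matrix.map_apply]
    by_cases h : i = j
    · subst h
      have h0 : T i i = 0 := by
        have : ¬ S i i = 1 := by rw [hdiag i]; norm_num
        simp [hT, this]
      rw [h0]
      simp [Matrix.add_apply, Matrix.mul_apply, Matrix.one_apply]
      decide
    · have h0 : (Int.castRingHom (ZMod 2)) (T i j) = 1 := by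
        simp only [hT, Matrix.of_apply]
        split_ifs with a
        · exact Int.cast_one
        · decide
      rw [h0]
      simp [Matrix.add_apply, Matrix.mul_apply, Matrix.one_apply_ne h]
  have hdet : (T.map (Int.castRingHom (ZMod 2))).det = 1 := by
    rw [hTJ, Matrix.det_one_add_replicateCol_mul_replicateRow]
    have hn2 : ((n : ZMod 2)) = 0 := by
      rw [ZMod.natCast_eq_zero_iff]
      exact hn.two_dvd
    simp [dotProduct, hn2]
  -- but the determinant equals ± the constant coefficient, which is 0
  have h0 : (T.map (Int.castRingHom (ZMod 2))).det = 0 := by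
    rw [Matrix.det_eq_sign_charpoly_coeff, Polynomial.coeff_zero_eq_eval_zero, hz2, mul_zero]
  rw [hdet] at h0
  exact one_ne_zero h0
end

section
/- Let S be a Seidel matrix of odd order. Then S has an eigenvalue of multiplicity exactly 1. -/
open Polynomial Matrix

namespace Polynomial

theorem Splits.dvd_derivative_sq {K : Type*} [Field K] [CharZero K] {p : K[X]} (hp : p.Splits)
    (hmult : ∀ t, p.rootMultiplicity t ≠ 1) : p ∣ derivative p ^ 2 := by
  classical
  rcases eq_or_ne p 0 with rfl | hp0
  · simp
  refine hp.dvd_of_roots_le_roots hp0 (Multiset.le_iff_count.2 fun t => ?_)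
  rw [count_roots, count_roots]
  by_cases ht : p.IsRoot t
  · have hder := derivative_rootMultiplicity_of_root ht
    have hm := hmult t
    have hpos := (rootMultiplicity_pos hp0).2 ht
    have hder0 : derivative p ≠ 0 := fun h => by simp [h] at hder; omega
    rw [pow_two, rootMultiplicity_mul (mul_ne_zero hder0 hder0), hder]
    omega
  · simp [rootMultiplicity_eq_zero ht]

theorem rootMultiplicity_ne_one_of_dvd_derivative_sq {R : Type*} [CommRing R] [IsDomain R]
    {p : R[X]} (hp : p ≠ 0) (hdvd : p ∣ derivative p ^ 2) (t : R) : p.rootMultiplicity t ≠ 1 := by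
  intro h1
  have hroot : p.IsRoot t := (rootMultiplicity_pos hp).1 (by omega)
  have hroot' : (derivative p).IsRoot t :=
    dvd_iff_isRoot.1 <| (prime_X_sub_C t).dvd_of_dvd_pow (n := 2) <|
      (dvd_iff_isRoot.2 hroot).trans hdvd
  have := (one_lt_rootMultiplicity_iff_isRoot hp).2 ⟨hroot, hroot'⟩
  omega

theorem dvd_derivative_sq_of_map {R S : Type*} [CommRing R] [CommRing S] {f : R →+* S}
    (hf : Function.Injective f) {q : R[X]} (hq : q.Monic)
    (h : q.map f ∣ derivative (q.map f) ^ 2) : q ∣ derivative q ^ 2 := by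
  rwa [derivative_map, ← Polynomial.map_pow, map_dvd_map f hf hq] at h

end Polynomial

theorem Matrix.IsHermitian.rootMultiplicity_charpoly {𝕜 ι : Type*} [RCLike 𝕜] [Fintype ι]
    [DecidableEq ι] {A : Matrix ι ι 𝕜} (hA : A.IsHermitian) (μ : ℝ) :
    A.charpoly.rootMultiplicity (μ : 𝕜) =
      (Finset.univ.filter fun i => hA.eigenvalues i = μ).card := by
  rw [← count_roots, hA.roots_charpoly_eq_eigenvalues, Multiset.count_map]
  simp [eq_comm, Finset.card_def, Finset.filter_val]

theorem Matrix.charpoly_vecMulVec_one_sub_one {R ι : Type*} [CommRing R] [Fintype ι]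
    [DecidableEq ι] :
    (vecMulVec (1 : ι → R) 1 - 1).charpoly
      = (X + 1) ^ Fintype.card ι - (Fintype.card ι : R[X]) * (X + 1) ^ (Fintype.card ι - 1) := by
  rw [← map_one (scalar ι), charpoly_sub_scalar, charpoly_vecMulVec]
  simp [smul_eq_C_mul]

theorem rootMultiplicity_zero_charpoly_vecMulVec_one_sub_one {n : ℕ} (hn : Odd n) :
    (vecMulVec (1 : Fin n → ZMod 2) 1 - 1).charpoly.rootMultiplicity 0 = 1 := by
  obtain ⟨k, rfl⟩ := hn
  have hcharpoly : (vecMulVec (1 : Fin (2 * k + 1) → ZMod 2) 1 - 1).charpoly =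
      (X - C 0) * (X + 1) ^ (2 * k) := by
    have h2 : (2 : (ZMod 2)[X]) = 0 := by exact_mod_cast CharP.cast_eq_zero (ZMod 2)[X] 2
    rw [charpoly_vecMulVec_one_sub_one, Fintype.card_fin]
    push_cast
    rw [C_0, sub_zero]
    linear_combination (-(k : (ZMod 2)[X]) * (X + 1) ^ (2 * k) : (ZMod 2)[X]) * h2
  have hne : (X + 1 : (ZMod 2)[X]) ^ (2 * k) ≠ 0 := pow_ne_zero _ (X_add_C_ne_zero 1)
  rw [hcharpoly, rootMultiplicity_mul (mul_ne_zero (X_sub_C_ne_zero 0) hne),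
    rootMultiplicity_X_sub_C_self, rootMultiplicity_eq_zero (by simp)]

theorem IsSeidel.exists_int_lift {n : ℕ} {S : Matrix (Fin n) (Fin n) ℝ} (hS : IsSeidel S) :
    ∃ T : Matrix (Fin n) (Fin n) ℤ, T.map (Int.castRingHom ℝ) = S ∧
      T.map (Int.castRingHom (ZMod 2)) = vecMulVec 1 1 - 1 := by
  refine ⟨S.map fun x => ⌊x⌋, ?_, ?_⟩ <;> ext i j <;> rcases eq_or_ne i j with rfl | hij
  · simp [hS.2.1]
  · rcases hS.2.2 i j hij with h | h <;> norm_num [h]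
  · simp [hS.2.1]
  · rcases hS.2.2 i j hij with h | h
    · simp [h, hij]
    · norm_num [h, hij]
      decide

theorem seidel_odd_order_simple_eigenvalue {n : ℕ} (hn : Odd n)
    (S : Matrix (Fin n) (Fin n) ℝ) (hS : IsSeidel S) (hH : S.IsHermitian) :
    ∃ μ : ℝ, (Finset.univ.filter fun i => hH.eigenvalues i = μ).card = 1 := by
  by_contra! hsimple
  obtain ⟨T, hTℝ, hT2⟩ := hS.exists_int_lift
  have hmult : ∀ t, S.charpoly.rootMultiplicity t ≠ 1 := fun t =>
    (hH.rootMultiplicity_charpoly t).trans_ne (hsimple t)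
  have hℝ : S.charpoly ∣ derivative S.charpoly ^ 2 := hH.splits_charpoly.dvd_derivative_sq hmult
  have hℤ : T.charpoly ∣ derivative T.charpoly ^ 2 :=
    dvd_derivative_sq_of_map (RingHom.injective_int (Int.castRingHom ℝ)) T.charpoly_monic
      (by rwa [← charpoly_map, hTℝ])
  have h2 := Polynomial.map_dvd (Int.castRingHom (ZMod 2)) hℤ
  rw [Polynomial.map_pow, ← derivative_map, ← charpoly_map, hT2] at h2
  exact rootMultiplicity_ne_one_of_dvd_derivative_sq (charpoly_monic _).ne_zero h2 0
    (rootMultiplicity_zero_charpoly_vecMulVec_one_sub_one hn)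
end

section
/- Let S be a Seidel matrix of odd order n with exactly three distinct eigenvalues. Then S has two distinct eigenvalues λ and μ such that the matrix ±(S−λI)(S−μI) (with sign chosen so it is positive semidefinite) is switching equivalent to |n−1+λμ|·J. -/
/-- The all-ones matrix. -/
def JmatR (n : ℕ) : Matrix (Fin n) (Fin n) ℝ := Matrix.of fun _ _ => 1

/-- A signed permutation matrix built from a sign function `d` and a permutation `σ`. -/
def signedPerm {n : ℕ} (d : Fin n → ℝ) (σ : Equiv.Perm (Fin n)) : Matrix (Fin n) (Fin n) ℝ :=
  Matrix.of fun i j => if j = σ i then d i else 0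

/-- Switching equivalence: `X = Pᵀ Y P` for a signed permutation matrix `P`. -/
def SwitchEquiv {n : ℕ} (X Y : Matrix (Fin n) (Fin n) ℝ) : Prop :=
  ∃ (d : Fin n → ℝ) (σ : Equiv.Perm (Fin n)), (∀ i, d i = 1 ∨ d i = -1) ∧
    X = Matrix.transpose (signedPerm d σ) * Y * signedPerm d σ

open Polynomial Matrix Finset

theorem Finset.exists_eq_insert_insert_of_card_eq_three {α : Type*} [DecidableEq α]
    {s : Finset α} {a : α} (hs : #s = 3) (ha : a ∈ s) :
    ∃ b c, a ≠ b ∧ a ≠ c ∧ b ≠ c ∧ s = {a, b, c} := by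
  have hcard : #(s.erase a) = 2 := by rw [card_erase_of_mem ha, hs]
  obtain ⟨b, c, hbc, hbc_eq⟩ := card_eq_two.mp hcard
  have hb : b ∈ s.erase a := by simp [hbc_eq]
  have hc : c ∈ s.erase a := by simp [hbc_eq]
  refine ⟨b, c, (ne_of_mem_erase hb).symm, (ne_of_mem_erase hc).symm, hbc, ?_⟩
  rw [← insert_erase ha, hbc_eq]

namespace Polynomial

theorem dvd_derivative_sq_of_splits {K : Type*} [Field K] [CharZero K] {p : K[X]}
    (hp : p.Splits) (h : ∀ a, p.rootMultiplicity a ≠ 1) : p ∣ derivative p ^ 2 := by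
  classical
  rcases eq_or_ne (derivative p) 0 with hp' | hp'
  · simp [hp']
  have hp0 : p ≠ 0 := fun h0 => hp' (by rw [h0, derivative_zero])
  conv_lhs => rw [hp.eq_prod_roots]
  rw [(isUnit_C.mpr (leadingCoeff_ne_zero.mpr hp0).isUnit).mul_left_dvd,
    Multiset.prod_X_sub_C_dvd_iff_le_roots (pow_ne_zero 2 hp'), Multiset.le_iff_count]
  intro a
  rw [roots_pow, Multiset.count_nsmul, count_roots, count_roots]
  by_cases ha : p.IsRoot a
  · rw [derivative_rootMultiplicity_of_root ha]
    have := h a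
    omega
  · rw [rootMultiplicity_eq_zero ha]
    exact Nat.zero_le _

theorem isRoot_derivative_of_dvd_derivative_sq {R : Type*} [CommRing R] [IsDomain R] {p : R[X]}
    {a : R} (hdvd : p ∣ derivative p ^ 2) (ha : p.IsRoot a) : (derivative p).IsRoot a := by
  rw [← dvd_iff_isRoot] at ha ⊢
  exact (prime_X_sub_C a).dvd_of_dvd_pow (ha.trans hdvd)

end Polynomial

namespace Matrix

theorem isRoot_charpoly_vecMulVec_one_sub_one_zmod_two {n : ℕ} (hn : Odd n) :
    (vecMulVec 1 1 - 1 : Matrix (Fin n) (Fin n) (ZMod 2)).charpoly.IsRoot 0 ∧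
      ¬ (derivative (vecMulVec 1 1 - 1 : Matrix (Fin n) (Fin n) (ZMod 2)).charpoly).IsRoot 0 := by
  obtain ⟨k, rfl⟩ := hn
  have h2 : (2 : ZMod 2) = 0 := rfl
  rw [← (scalar (Fin (2 * k + 1))).map_one, charpoly_sub_scalar, charpoly_vecMulVec]
  simp [derivative_pow, h2]

theorem mul_diagonal_mul_apply_of_eq_zero {ι R : Type*} [Fintype ι] [DecidableEq ι]
    [CommSemiring R] {A B : Matrix ι ι R} {g : ι → R} {i₀ : ι} (hg : ∀ i ≠ i₀, g i = 0)
    (a b : ι) : (A * diagonal g * B) a b = g i₀ * (A a i₀ * B i₀ b) := by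
  rw [mul_apply, Finset.sum_eq_single i₀ (fun i _ hi => by simp [hg i hi]) (by simp),
    mul_diagonal]
  ring

theorem exists_eq_smul_vecMulVec_of_rank_one {ι : Type*} {M : Matrix ι ι ℝ} {w : ι → ℝ}
    {c δ : ℝ} (hc : c ≠ 0) (hM : ∀ a b, M a b = c * (w a * w b)) (hdiag : ∀ a, M a a = δ) :
    ∃ d : ι → ℝ, (∀ a, d a = 1 ∨ d a = -1) ∧ M = δ • vecMulVec d d := by
  set d : ι → ℝ := fun a => if 0 ≤ w a then 1 else -1
  have hd_mul_abs : ∀ a, d a * |w a| = w a := by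
    intro a
    by_cases h : 0 ≤ w a
    · simp [d, h, abs_of_nonneg h]
    · simp [d, h, abs_of_neg (not_le.mp h)]
  have hsq : ∀ a, c * |w a| ^ 2 = δ := fun a => by
    rw [sq_abs, ← hdiag a, hM, sq]
  have habs : ∀ a b, |w a| = |w b| := fun a b => by
    have := (hsq a).trans (hsq b).symm
    rw [mul_right_inj' hc] at this
    exact (pow_left_inj₀ (abs_nonneg _) (abs_nonneg _) two_ne_zero).mp this
  refine ⟨d, fun a => by by_cases h : 0 ≤ w a <;> simp [d, h], ?_⟩
  ext a b
  calc M a b = c * ((d a * |w a|) * (d b * |w b|)) := by rw [hM, hd_mul_abs, hd_mul_abs]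
    _ = (c * |w a| ^ 2) * (d a * d b) := by rw [habs b a]; ring
    _ = (δ • vecMulVec d d) a b := by rw [hsq]; simp [vecMulVec_apply]

end Matrix

theorem switchEquiv_smul_vecMulVec_smul_JmatR {n : ℕ} {d : Fin n → ℝ}
    (hd : ∀ i, d i = 1 ∨ d i = -1) (x : ℝ) :
    SwitchEquiv (x • vecMulVec d d) (x • JmatR n) := by
  have hP : signedPerm d (Equiv.refl _) = diagonal d := by
    ext i j
    simp [signedPerm, diagonal_apply, eq_comm]
  refine ⟨d, Equiv.refl _, hd, ?_⟩
  ext a b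
  simp [hP, JmatR, vecMulVec_apply]
  ring

theorem exists_sign_smul_posSemidef_and_switchEquiv {n : ℕ} {M : Matrix (Fin n) (Fin n) ℝ}
    {δ : ℝ} {d : Fin n → ℝ} (hd : ∀ i, d i = 1 ∨ d i = -1) (hM : M = δ • vecMulVec d d) :
    ∃ ε : ℝ, (ε = 1 ∨ ε = -1) ∧ (ε • M).PosSemidef ∧ SwitchEquiv (ε • M) (|δ| • JmatR n) := by
  obtain ⟨ε, hε, hεδ⟩ : ∃ ε : ℝ, (ε = 1 ∨ ε = -1) ∧ ε * δ = |δ| := by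
    rcases le_total 0 δ with h | h
    · exact ⟨1, .inl rfl, by rw [one_mul, abs_of_nonneg h]⟩
    · exact ⟨-1, .inr rfl, by rw [abs_of_nonpos h]; ring⟩
  have hεM : ε • M = |δ| • vecMulVec d d := by rw [hM, smul_smul, hεδ]
  refine ⟨ε, hε, ?_, hεM ▸ switchEquiv_smul_vecMulVec_smul_JmatR hd _⟩
  simpa [hεM] using (posSemidef_vecMulVec_self_star d).smul (abs_nonneg δ)

namespace Matrix.IsHermitian

variable {n : ℕ} {S : Matrix (Fin n) (Fin n) ℝ}

theorem rootMultiplicity_charpoly_s6 (hH : S.IsHermitian) (θ : ℝ) :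
    S.charpoly.rootMultiplicity θ = #{i | hH.eigenvalues i = θ} := by
  rw [← count_roots, hH.roots_charpoly_eq_eigenvalues, Multiset.count_map]
  simp [Finset.card, Finset.filter_val, eq_comm]

theorem sub_smul_mul_sub_smul (hH : S.IsHermitian) (a b : ℝ) :
    (S - a • 1) * (S - b • 1) = Unitary.conjStarAlgAut ℝ _ hH.eigenvectorUnitary
      (diagonal fun i => (hH.eigenvalues i - a) * (hH.eigenvalues i - b)) := by
  have hD : diagonal (fun i => (hH.eigenvalues i - a) * (hH.eigenvalues i - b)) =
      (diagonal hH.eigenvalues - a • 1) * (diagonal hH.eigenvalues - b • 1) := by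
    rw [smul_one_eq_diagonal, smul_one_eq_diagonal, diagonal_sub, diagonal_sub,
      diagonal_mul_diagonal]
  rw [hD, map_mul, map_sub, map_sub, map_smul, map_smul, map_one]
  conv_lhs => rw [hH.spectral_theorem]
  simp

theorem sub_smul_mul_sub_smul_apply_of_forall_ne (hH : S.IsHermitian) {a b : ℝ} {i₀ : Fin n}
    (h : ∀ i ≠ i₀, hH.eigenvalues i = a ∨ hH.eigenvalues i = b) (x y : Fin n) :
    ((S - a • 1) * (S - b • 1)) x y = (hH.eigenvalues i₀ - a) * (hH.eigenvalues i₀ - b) *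
      (hH.eigenvectorUnitary x i₀ * hH.eigenvectorUnitary y i₀) := by
  rw [hH.sub_smul_mul_sub_smul, Unitary.conjStarAlgAut_apply,
    mul_diagonal_mul_apply_of_eq_zero (i₀ := i₀)]
  · simp
  · intro i hi
    rcases h i hi with h | h <;> simp [h]

end Matrix.IsHermitian

namespace IsSeidel

variable {n : ℕ} {S : Matrix (Fin n) (Fin n) ℝ}

theorem mul_self_apply_self (hS : IsSeidel S) (i : Fin n) : (S * S) i i = n - 1 := by
  have hentry : ∀ k, S i k * S k i = 1 - if k = i then 1 else 0 := by
    intro k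
    by_cases hk : k = i
    · simp [hk, hS.2.1]
    · rw [hS.1.apply i k, if_neg hk]
      rcases hS.2.2 i k (Ne.symm hk) with h | h <;> simp [h]
  simp [mul_apply, hentry, Finset.sum_sub_distrib]

theorem sub_smul_mul_sub_smul_apply_self (hS : IsSeidel S) (a b : ℝ) (i : Fin n) :
    ((S - a • 1) * (S - b • 1)) i i = n - 1 + a * b := by
  have hexpand : (S - a • 1) * (S - b • 1) = S * S - (a + b) • S + (a * b) • 1 := by
    simp only [sub_mul, mul_sub, smul_mul_assoc, mul_smul_comm, mul_one, one_mul]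
    module
  rw [hexpand]
  simp [hS.mul_self_apply_self, hS.2.1]

theorem exists_int_lift_s6 (hS : IsSeidel S) :
    ∃ T : Matrix (Fin n) (Fin n) ℤ, T.map (Int.castRingHom ℝ) = S ∧
      T.map (Int.castRingHom (ZMod 2)) = vecMulVec 1 1 - 1 := by
  refine ⟨of fun i j => if i = j then 0 else if S i j = 1 then 1 else -1, ?_, ?_⟩
  · ext i j
    by_cases hij : i = j
    · simp [hij, hS.2.1]
    · rcases hS.2.2 i j hij with h | h <;> norm_num [hij, h]
  · ext i j
    by_cases hij : i = j
    · simp [hij]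
    · by_cases h : S i j = 1 <;> simp [hij, h, one_apply_ne hij]

theorem exists_rootMultiplicity_charpoly_eq_one (hS : IsSeidel S) (hn : Odd n)
    (hsplit : S.charpoly.Splits) : ∃ θ, S.charpoly.rootMultiplicity θ = 1 := by
  obtain ⟨T, hTℝ, hT₂⟩ := hS.exists_int_lift_s6
  by_contra! h
  have hdvdℤ : T.charpoly ∣ derivative T.charpoly ^ 2 := by
    rw [← map_dvd_map (Int.castRingHom ℝ) Int.cast_injective T.charpoly_monic,
      Polynomial.map_pow, ← derivative_map, ← charpoly_map, hTℝ]
    exact dvd_derivative_sq_of_splits hsplit h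
  have hdvd₂ := Polynomial.map_dvd (Int.castRingHom (ZMod 2)) hdvdℤ
  rw [Polynomial.map_pow, ← derivative_map, ← charpoly_map, hT₂] at hdvd₂
  obtain ⟨hroot, hnot⟩ := isRoot_charpoly_vecMulVec_one_sub_one_zmod_two (n := n) hn
  exact hnot (isRoot_derivative_of_dvd_derivative_sq hdvd₂ hroot)

theorem exists_simple_eigenvalue (hS : IsSeidel S) (hn : Odd n) (hH : S.IsHermitian) :
    ∃ i₀, ∀ i, hH.eigenvalues i = hH.eigenvalues i₀ → i = i₀ := by
  obtain ⟨θ, hθ⟩ := hS.exists_rootMultiplicity_charpoly_eq_one hn hH.splits_charpoly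
  rw [hH.rootMultiplicity_charpoly_s6, card_eq_one] at hθ
  obtain ⟨i₀, hi₀⟩ := hθ
  have hmem : ∀ i, hH.eigenvalues i = θ ↔ i = i₀ := fun i => by
    simpa using Finset.ext_iff.mp hi₀ i
  exact ⟨i₀, fun i hi => (hmem i).mp (hi.trans ((hmem i₀).mpr rfl))⟩

end IsSeidel


theorem seidel_odd_three_ev_M_form {n : ℕ} (hn : Odd n)
    (S : Matrix (Fin n) (Fin n) ℝ) (hS : IsSeidel S) (hH : S.IsHermitian)
    (h3 : (Finset.univ.image hH.eigenvalues).card = 3) :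
    ∃ lam mu : ℝ, lam ≠ mu ∧
      lam ∈ Finset.univ.image hH.eigenvalues ∧ mu ∈ Finset.univ.image hH.eigenvalues ∧
      ∃ ε : ℝ, (ε = 1 ∨ ε = -1) ∧
        (ε • ((S - lam • 1) * (S - mu • 1))).PosSemidef ∧
        SwitchEquiv (ε • ((S - lam • 1) * (S - mu • 1)))
          (|(n : ℝ) - 1 + lam * mu| • JmatR n) := by
  obtain ⟨i₀, hsimple⟩ := hS.exists_simple_eigenvalue hn hH
  obtain ⟨lam, mu, h₀lam, h₀mu, hlm, himage⟩ :=
    exists_eq_insert_insert_of_card_eq_three h3 (mem_image_of_mem _ (mem_univ i₀))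
  have hothers : ∀ i ≠ i₀, hH.eigenvalues i = lam ∨ hH.eigenvalues i = mu := by
    intro i hi
    have hmem : hH.eigenvalues i ∈ ({hH.eigenvalues i₀, lam, mu} : Finset ℝ) :=
      himage ▸ mem_image_of_mem _ (mem_univ i)
    simpa [mt (hsimple i) hi] using hmem
  obtain ⟨d, hd, hMd⟩ := exists_eq_smul_vecMulVec_of_rank_one
    (mul_ne_zero (sub_ne_zero.mpr h₀lam) (sub_ne_zero.mpr h₀mu))
    (hH.sub_smul_mul_sub_smul_apply_of_forall_ne hothers)
    (hS.sub_smul_mul_sub_smul_apply_self lam mu)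
  exact ⟨lam, mu, hlm, by simp [himage], by simp [himage],
    exists_sign_smul_posSemidef_and_switchEquiv hd hMd⟩
end

section
/- Let S be a Seidel matrix of order n with exactly three distinct eigenvalues λ, μ, ν. Then every diagonal entry of S³ equals (λ+μ+ν)(n−1) + λμν. -/
theorem seidel_cube_diag_three_eigenvalues {n : ℕ} (S : Matrix (Fin n) (Fin n) ℝ)
    (hS : IsSeidel S) (lam mu nu : ℝ)
    (hlm : lam ≠ mu) (hln : lam ≠ nu) (hmn : mu ≠ nu)
    (hmin : (S - lam • 1) * (S - mu • 1) * (S - nu • 1) = 0) :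
    ∀ i, (S ^ 3) i i = (lam + mu + nu) * ((n : ℝ) - 1) + lam * mu * nu := by
  intro i
  have key : S ^ 3 = (lam + mu + nu) • S ^ 2
      - (lam * mu + lam * nu + mu * nu) • S + (lam * mu * nu) • (1 : Matrix (Fin n) (Fin n) ℝ) := by
    have h := hmin
    simp only [sub_mul, mul_sub, smul_mul_assoc, mul_smul_comm, mul_one, one_mul,
      smul_smul] at h
    have h2 : S ^ 2 = S * S := sq S
    have h3 : S ^ 3 = S * S * S := by rw [pow_succ, sq]
    rw [h2, h3]
    linear_combination (norm := module) h
  have hsq : (S ^ 2) i i = (n : ℝ) - 1 := by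
    rw [sq, Matrix.mul_apply]
    have hterm : ∀ j, S i j * S j i = if j = i then (0:ℝ) else 1 := by
      intro j
      by_cases hj : j = i
      · subst hj; simp [hS.2.1 j]
      · have hsymm : S j i = S i j := congrFun (congrFun hS.1 i) j
        rcases hS.2.2 i j (Ne.symm hj) with h | h <;> simp [hsymm, h, hj]
    rw [Finset.sum_congr rfl (fun j _ => hterm j)]
    have : ∑ j : Fin n, (if j = i then (0:ℝ) else 1)
        = ∑ j : Fin n, ((1:ℝ) - if j = i then 1 else 0) := by
      apply Finset.sum_congr rfl; intro j _; split <;> ring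
    rw [this, Finset.sum_sub_distrib]
    simp
  have hdiag := congrFun (congrFun key i) i
  simp only [Matrix.add_apply, Matrix.sub_apply, Matrix.smul_apply, Matrix.one_apply_eq,
    smul_eq_mul, hS.2.1 i, hsq] at hdiag
  rw [hdiag]; ring
end

section
/- Let a, b be real numbers and let M be a symmetric n×n matrix all of whose entries lie in {a, −a, b, −b}, having exactly two distinct eigenvalues λ and μ. Then for each row index i, the number of indices j with (M_{i,j})² = b² equals ((λ+μ)M_{i,i} − na² − λμ)/(b²−a²). -/
theorem two_eigenvalue_matrix_row_count {n : ℕ} (a b lam mu : ℝ)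
    (M : Matrix (Fin n) (Fin n) ℝ) (hsymm : M.IsSymm)
    (hentries : ∀ i j, M i j = a ∨ M i j = -a ∨ M i j = b ∨ M i j = -b)
    (hab : a ^ 2 ≠ b ^ 2)
    (hmin : M * M = (lam + mu) • M - (lam * mu) • 1) :
    ∀ i, ((Finset.univ.filter fun j => (M i j) ^ 2 = b ^ 2).card : ℝ) =
      ((lam + mu) * M i i - n * a ^ 2 - lam * mu) / (b ^ 2 - a ^ 2) := by
  intro i
  have hsq : ∀ j, (M i j) ^ 2 = a ^ 2 ∨ (M i j) ^ 2 = b ^ 2 := by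
    intro j
    rcases hentries i j with h | h | h | h <;> rw [h] <;>
      [left; left; right; right] <;> ring
  have h1 : (M * M) i i = ∑ j, (M i j) ^ 2 := by
    rw [Matrix.mul_apply]
    refine Finset.sum_congr rfl fun j _ => ?_
    rw [hsymm.apply i j, sq]
  have h2 : (M * M) i i = (lam + mu) * M i i - lam * mu := by
    rw [hmin]
    simp [Matrix.sub_apply, Matrix.smul_apply, Matrix.one_apply_eq]
  set P : Fin n → Prop := fun j => (M i j) ^ 2 = b ^ 2 with hP
  set k := (Finset.univ.filter P).card with hk
  set k' := (Finset.univ.filter fun j => ¬ P j).card with hk'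
  have hcard : k + k' = n := by
    rw [hk, hk', Finset.card_filter_add_card_filter_not]
    simp
  have hsum : ∑ j, (M i j) ^ 2 = k * b ^ 2 + k' * a ^ 2 := by
    classical
    rw [← Finset.sum_filter_add_sum_filter_not Finset.univ P]
    congr 1
    · rw [Finset.sum_congr rfl (fun j hj => (Finset.mem_filter.mp hj).2),
        Finset.sum_const, nsmul_eq_mul]
    · rw [Finset.sum_congr rfl (fun j hj => ?_), Finset.sum_const, nsmul_eq_mul]
      rcases hsq j with h | h
      · exact h
      · exact absurd h (Finset.mem_filter.mp hj).2
  have hne : b ^ 2 - a ^ 2 ≠ 0 := sub_ne_zero.mpr (Ne.symm hab)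
  rw [eq_div_iff hne]
  have hc : (k : ℝ) + k' = n := by exact_mod_cast hcard
  have key : (k : ℝ) * b ^ 2 + k' * a ^ 2 = (lam + mu) * M i i - lam * mu := by
    rw [← hsum, ← h1, h2]
  nlinarith [key, hc]
end

section
/- Let p ≡ 3 (mod 4) be a prime and let M be a positive semidefinite symmetric integer matrix of rank 2 with all diagonal entries equal to p. Then M is switching equivalent to a matrix having at most two distinct rows. -/
/-!
Rank 2 makes every 3 × 3 principal minor vanish; with diagonal `p` and off-diagonal entries
`a, b, c` this reads `p³ + 2abc = p(a² + b² + c²)`, while positive semidefiniteness gives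
`a², b², c² ≤ p²`. Then `p` divides one entry, which is therefore `0` or `±p`; if it is `0`, the
other two satisfy `b² + c² = p²`, and as `-1` is not a square mod `p ≡ 3 (mod 4)` one of them is
`±p`. So among any three indices two are joined by an entry `±p`, and an entry `M i j = ±p` forces
row `i` to be `±` row `j`. Hence every row is `±` one of two rows, and switching the signs leaves at
most two distinct rows.
-/

/-- A signed permutation matrix built from a sign function `d` and a permutation `σ`. -/
def signedPermZ {n : ℕ} (d : Fin n → ℤ) (σ : Equiv.Perm (Fin n)) : Matrix (Fin n) (Fin n) ℤ :=
  Matrix.of fun i j => if j = σ i then d i else 0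

theorem Int.prime_dvd_and_dvd_of_dvd_sq_add_sq {p : ℕ} (hp : p.Prime) (hp4 : p % 4 = 3)
    {x y : ℤ} (h : (p : ℤ) ∣ x ^ 2 + y ^ 2) : (p : ℤ) ∣ x ∧ (p : ℤ) ∣ y := by
  have := Fact.mk hp
  refine legendreSym.prime_dvd_of_eq_neg_one (a := -1) ?_ (by simpa using h)
  rw [legendreSym.at_neg_one (by omega), ZMod.χ₄_nat_three_mod_four hp4]

theorem Int.eq_zero_or_sq_eq_of_dvd_of_sq_le {p x : ℤ} (hd : p ∣ x) (hx : x ^ 2 ≤ p ^ 2) :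
    x = 0 ∨ x ^ 2 = p ^ 2 := by
  obtain ⟨k, rfl⟩ := hd
  rcases eq_or_ne p 0 with rfl | hp
  · simp
  have hk : k ^ 2 ≤ 1 := by
    have : 0 < p ^ 2 := by positivity
    nlinarith
  have hk₁ : -1 ≤ k := by nlinarith
  have hk₂ : k ≤ 1 := by nlinarith
  interval_cases k <;> simp

section PrincipalMinor

variable {p : ℕ} {a b c : ℤ}

theorem sq_eq_sq_or_of_minor_eq_zero_of_dvd (hp : p.Prime) (hp4 : p % 4 = 3)
    (ha : a ^ 2 ≤ p ^ 2) (hd : (p : ℤ) ∣ a)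
    (h : (p : ℤ) ^ 3 + 2 * a * b * c = p * (a ^ 2 + b ^ 2 + c ^ 2)) :
    a ^ 2 = p ^ 2 ∨ b ^ 2 = p ^ 2 ∨ c ^ 2 = p ^ 2 := by
  rcases Int.eq_zero_or_sq_eq_of_dvd_of_sq_le hd ha with rfl | ha
  · have hp0 : (p : ℤ) ≠ 0 := by exact_mod_cast hp.ne_zero
    have hbc : b ^ 2 + c ^ 2 = p ^ 2 := by
      apply mul_left_cancel₀ hp0
      linear_combination -h
    obtain ⟨hb, -⟩ :=
      Int.prime_dvd_and_dvd_of_dvd_sq_add_sq hp hp4 (hbc ▸ dvd_pow_self _ two_ne_zero)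
    rcases Int.eq_zero_or_sq_eq_of_dvd_of_sq_le hb (by nlinarith) with rfl | hb
    · exact Or.inr (Or.inr (by simpa using hbc))
    · exact Or.inr (Or.inl hb)
  · exact Or.inl ha

theorem sq_eq_sq_or_of_minor_eq_zero (hp : p.Prime) (hp4 : p % 4 = 3) (ha : a ^ 2 ≤ p ^ 2)
    (hb : b ^ 2 ≤ p ^ 2) (hc : c ^ 2 ≤ p ^ 2)
    (h : (p : ℤ) ^ 3 + 2 * a * b * c = p * (a ^ 2 + b ^ 2 + c ^ 2)) :
    a ^ 2 = p ^ 2 ∨ b ^ 2 = p ^ 2 ∨ c ^ 2 = p ^ 2 := by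
  have hpZ : Prime (p : ℤ) := Nat.prime_iff_prime_int.mp hp
  have h2 : ¬ (p : ℤ) ∣ 2 := fun h2 => by
    have := (Nat.prime_dvd_prime_iff_eq hp Nat.prime_two).mp (Int.natCast_dvd_ofNat.mp h2)
    omega
  have habc : (p : ℤ) ∣ 2 * a * b * c := ⟨a ^ 2 + b ^ 2 + c ^ 2 - p ^ 2, by linear_combination h⟩
  have hdvd : (p : ℤ) ∣ a ∨ (p : ℤ) ∣ b ∨ (p : ℤ) ∣ c := by
    simpa only [hpZ.dvd_mul, h2, false_or, or_assoc] using habc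
  rcases hdvd with hda | hdb | hdc
  · exact sq_eq_sq_or_of_minor_eq_zero_of_dvd hp hp4 ha hda h
  · have := sq_eq_sq_or_of_minor_eq_zero_of_dvd hp hp4 (b := a) (c := c) hb hdb
      (by linear_combination h)
    tauto
  · have := sq_eq_sq_or_of_minor_eq_zero_of_dvd hp hp4 (b := a) (c := b) hc hdc
      (by linear_combination h)
    tauto

end PrincipalMinor

theorem mul_eq_mul_of_minor_eq_zero {R : Type*} [CommRing R] [NoZeroDivisors R] {p a b c : R}
    (ha : a ^ 2 = p ^ 2) (h : p ^ 3 + 2 * a * b * c = p * (a ^ 2 + b ^ 2 + c ^ 2)) :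
    p * b = a * c := by
  -- once `a² = p²`, `p` times the minor is `-(p b - a c)²`
  have : (p * b - a * c) ^ 2 = 0 := by linear_combination (-p) * h + (c ^ 2 - p ^ 2) * ha
  exact sub_eq_zero.mp (pow_eq_zero_iff two_ne_zero |>.mp this)

theorem Matrix.det_submatrix_eq_zero_of_rank_lt {K m : Type*} [Field K] [Fintype m]
    (A : Matrix m m K) {k : ℕ} (e : Fin k → m) (h : A.rank < k) :
    (A.submatrix e e).det = 0 := by
  by_contra hdet
  have hfull : (A.submatrix e e).rank = k := by
    rw [rank_of_isUnit _ ((isUnit_iff_isUnit_det _).2 (isUnit_iff_ne_zero.2 hdet)),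
      Fintype.card_fin]
  exact (hfull ▸ A.rank_submatrix_le e e).not_gt h

theorem Matrix.PosSemidef.apply_mul_apply_le {m : Type*} [Fintype m] {A : Matrix m m ℝ}
    (hA : A.PosSemidef) (i j : m) : A i j * A j i ≤ A i i * A j j := by
  classical
  have := (hA.submatrix ![i, j]).det_nonneg
  rw [det_fin_two] at this
  simpa [sub_nonneg] using this

section IntegerMatrix

variable {ι : Type*} [Fintype ι] {M : Matrix ι ι ℤ} {p : ℤ}

theorem sq_le_of_posSemidef (hsymm : M.IsSymm) (hpsd : (M.map (Int.cast : ℤ → ℝ)).PosSemidef)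
    (hdiag : ∀ i, M i i = p) (i j : ι) : M i j ^ 2 ≤ p ^ 2 := by
  have := hpsd.apply_mul_apply_le i j
  simp only [Matrix.map_apply, hsymm.apply i j, hdiag] at this
  exact_mod_cast (by nlinarith : ((M i j : ℝ)) ^ 2 ≤ (p : ℝ) ^ 2)

theorem minor_eq_zero_of_rank_lt_three (hsymm : M.IsSymm) (hdiag : ∀ i, M i i = p)
    (hrank : (M.map (Int.cast : ℤ → ℝ)).rank < 3) (i j k : ι) :
    p ^ 3 + 2 * M i j * M i k * M j k = p * (M i j ^ 2 + M i k ^ 2 + M j k ^ 2) := by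
  have h := (M.map (Int.cast : ℤ → ℝ)).det_submatrix_eq_zero_of_rank_lt ![i, j, k] hrank
  simp only [Matrix.det_fin_three, Matrix.submatrix_apply, Matrix.map_apply, Matrix.cons_val_zero,
    Matrix.cons_val_one, Matrix.cons_val_two, Matrix.head_cons, Matrix.tail_cons, hsymm.apply i j,
    hsymm.apply i k, hsymm.apply j k, hdiag] at h
  have hR : ((p ^ 3 + 2 * M i j * M i k * M j k : ℤ) : ℝ) =
      ((p * (M i j ^ 2 + M i k ^ 2 + M j k ^ 2) : ℤ) : ℝ) := by
    push_cast
    linear_combination h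
  exact_mod_cast hR

end IntegerMatrix

theorem exists_sign_smul_eq_of_sq_eq {ι : Type*} {p a : ℤ} {u v : ι → ℤ} (hp : p ≠ 0)
    (ha : a ^ 2 = p ^ 2) (h : ∀ k, p * u k = a * v k) :
    ∃ ε : ℤ, (ε = 1 ∨ ε = -1) ∧ u = ε • v := by
  rcases sq_eq_sq_iff_eq_or_eq_neg.mp ha with rfl | rfl
  · exact ⟨1, .inl rfl, funext fun k => by simpa using mul_left_cancel₀ hp (h k)⟩
  · exact ⟨-1, .inr rfl, funext fun k => by
      simpa using mul_left_cancel₀ hp ((h k).trans (neg_mul_comm _ _))⟩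

theorem exists_forall_or_of_forall_triple {α : Type*} {R : α → α → Prop}
    (h : ∀ i j k, R i j ∨ R i k ∨ R j k) (a : α) : ∃ b, ∀ c, R a c ∨ R b c := by
  by_cases hall : ∀ c, R a c
  · exact ⟨a, fun c => .inl (hall c)⟩
  · obtain ⟨b, hb⟩ := not_forall.mp hall
    exact ⟨b, fun c => (h a b c).resolve_left hb⟩

theorem signedPermZ_one {n : ℕ} (d : Fin n → ℤ) : signedPermZ d 1 = Matrix.diagonal d := by
  ext i j
  simp [signedPermZ, Matrix.diagonal_apply, eq_comm]

theorem transpose_signedPermZ_one_mul_mul_apply {n : ℕ} (M : Matrix (Fin n) (Fin n) ℤ)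
    (d : Fin n → ℤ) (i j : Fin n) :
    (Matrix.transpose (signedPermZ d 1) * M * signedPermZ d 1) i j = d i * M i j * d j := by
  rw [signedPermZ_one, Matrix.diagonal_transpose, Matrix.mul_diagonal, Matrix.diagonal_mul]

theorem exists_switching_two_rows {n : ℕ} (M : Matrix (Fin n) (Fin n) ℤ) (r₁ r₂ : Fin n)
    (h : ∀ i, ∃ ε : ℤ, (ε = 1 ∨ ε = -1) ∧ (M i = ε • M r₁ ∨ M i = ε • M r₂)) :
    ∃ (d : Fin n → ℤ) (σ : Equiv.Perm (Fin n)), (∀ i, d i = 1 ∨ d i = -1) ∧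
      ∃ r₁ r₂ : Fin n → ℤ,
        ∀ i, (Matrix.transpose (signedPermZ d σ) * M * signedPermZ d σ) i = r₁ ∨
             (Matrix.transpose (signedPermZ d σ) * M * signedPermZ d σ) i = r₂ := by
  choose d hd hrow using h
  have hd2 : ∀ i, d i * d i = 1 := fun i => by rcases hd i with h | h <;> simp [h]
  refine ⟨d, 1, hd, fun j => M r₁ j * d j, fun j => M r₂ j * d j, fun i => ?_⟩
  have hclass : ∀ r, M i = d i • M r →
      (Matrix.transpose (signedPermZ d 1) * M * signedPermZ d 1) i = fun j => M r j * d j :=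
    fun r h => funext fun j => by
      rw [transpose_signedPermZ_one_mul_mul_apply, h, Pi.smul_apply, smul_eq_mul, ← mul_assoc,
        hd2, one_mul]
  exact (hrow i).imp (hclass r₁) (hclass r₂)

theorem rank_two_prime_diag {n : ℕ} (p : ℕ) (hp : p.Prime) (hp4 : p % 4 = 3)
    (M : Matrix (Fin n) (Fin n) ℤ) (hsymm : M.IsSymm)
    (hpsd : (M.map (Int.cast : ℤ → ℝ)).PosSemidef)
    (hdiag : ∀ i, M i i = (p : ℤ))
    (hrank : (M.map (Int.cast : ℤ → ℝ)).rank = 2) :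
    ∃ (d : Fin n → ℤ) (σ : Equiv.Perm (Fin n)), (∀ i, d i = 1 ∨ d i = -1) ∧
      ∃ r₁ r₂ : Fin n → ℤ,
        ∀ i, (Matrix.transpose (signedPermZ d σ) * M * signedPermZ d σ) i = r₁ ∨
             (Matrix.transpose (signedPermZ d σ) * M * signedPermZ d σ) i = r₂ := by
  have hminor := minor_eq_zero_of_rank_lt_three hsymm hdiag (by omega)
  have hbound := sq_le_of_posSemidef hsymm hpsd hdiag
  have htriple : ∀ i j k,
      M i j ^ 2 = (p : ℤ) ^ 2 ∨ M i k ^ 2 = (p : ℤ) ^ 2 ∨ M j k ^ 2 = (p : ℤ) ^ 2 :=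
    fun i j k => sq_eq_sq_or_of_minor_eq_zero hp hp4 (hbound i j) (hbound i k) (hbound j k)
      (hminor i j k)
  have hrow : ∀ r i, M r i ^ 2 = (p : ℤ) ^ 2 → ∃ ε : ℤ, (ε = 1 ∨ ε = -1) ∧ M i = ε • M r := by
    intro r i h
    rw [← hsymm.apply] at h
    exact exists_sign_smul_eq_of_sq_eq (by exact_mod_cast hp.ne_zero) h
      fun k => mul_eq_mul_of_minor_eq_zero h (hminor i r k)
  have hn : 2 ≤ n := by simpa [hrank] using (M.map (Int.cast : ℤ → ℝ)).rank_le_card_width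
  obtain ⟨r₂, hr₂⟩ := exists_forall_or_of_forall_triple htriple ⟨0, by omega⟩
  refine exists_switching_two_rows M ⟨0, by omega⟩ r₂ fun i => ?_
  rcases hr₂ i with h | h
  · obtain ⟨ε, hε, hi⟩ := hrow _ i h
    exact ⟨ε, hε, .inl hi⟩
  · obtain ⟨ε, hε, hi⟩ := hrow _ i h
    exact ⟨ε, hε, .inr hi⟩
end
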